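/- arXiv:1704.07586 — 3 statements merged into one kernel-verified Lean document; each statement's English description precedes it below -/
import Mathlib

section
/- Let κ be a symmetric bilinear form on ℂ² with nonzero determinant (equivalently κ_{AB}κ^{AB} ≠ 0, where indices are raised with the symplectic form ε). Then there exist vectors o, ι ∈ ℂ² with ε(o, ι) = 1 and a nonzero scalar c ∈ ℂ such that κ(u, v) = c · (o(u)ι(v) + ι(u)o(v))/2 for all u, v, where o, ι are identified with their ε-duals. In other words, κ_{AB} = c · o_{(A}ι_{B)} in an adapted normalized spin dyad. -/
/-!
Over `ℂ` the quadratic form `x ↦ xᵀ κ x` splits into linear factors `(α ⬝ᵥ x) (β ⬝ᵥ x)`, so the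
symmetric matrix `κ` is the symmetrized outer product of `α` and `β`. Its determinant is
`-ε(α, β)² / 4`, so `det κ ≠ 0` makes `α, β` independent; raising their indices with `ε` and
dividing `β` by `ε(α, β)` gives the normalized dyad, with `c = ε(α, β)`.
-/

open Matrix

noncomputable section

/-- The spinor epsilon `ε_{AB}`. -/
def eps : Matrix (Fin 2) (Fin 2) ℂ := !![0, 1; -1, 0]

/-- The symplectic pairing `ε(u, v) = u^A ε_{AB} v^B`; equivalently, the ε-dual
covector of `u` applied to `v`. -/
def epsPair (u v : Fin 2 → ℂ) : ℂ := ∑ a, ∑ b, u a * eps a b * v b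

/-- The bilinear form with component matrix `κ_{AB}` applied to two vectors. -/
def bil (κ : Matrix (Fin 2) (Fin 2) ℂ) (u v : Fin 2 → ℂ) : ℂ :=
  ∑ a, ∑ b, u a * κ a b * v b

section SymOuter

variable {K : Type*} [Field K]

def symOuter (α β : Fin 2 → K) : Matrix (Fin 2) (Fin 2) K :=
  Matrix.of fun i j => (α i * β j + β i * α j) / 2

theorem det_symOuter (α β : Fin 2 → K) :
    (symOuter α β).det = -((α 0 * β 1 - α 1 * β 0) / 2) ^ 2 := by
  rw [det_fin_two]
  simp only [symOuter, of_apply]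
  ring

theorem exists_symOuter_eq_of_transpose_eq [IsAlgClosed K] [NeZero (2 : K)]
    (κ : Matrix (Fin 2) (Fin 2) K) (hsym : κᵀ = κ) : ∃ α β, symOuter α β = κ := by
  have h10 : κ 1 0 = κ 0 1 := congr_fun₂ hsym 0 1
  by_cases ha : κ 0 0 = 0
  · refine ⟨![0, 1], ![2 * κ 0 1, κ 1 1], ?_⟩
    ext i j
    fin_cases i <;> fin_cases j <;> simp [symOuter, ha, h10, two_ne_zero]
  · -- `a x² + 2 b x y + d y² = (a x + (b + δ) y) (x + (b - δ) y / a)` when `δ² = b² - a d`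
    obtain ⟨δ, hδ⟩ := IsAlgClosed.exists_pow_nat_eq (κ 0 1 ^ 2 - κ 0 0 * κ 1 1) two_pos
    refine ⟨![κ 0 0, κ 0 1 + δ], ![1, (κ 0 1 - δ) / κ 0 0], ?_⟩
    ext i j
    fin_cases i <;> fin_cases j <;> simp [symOuter, h10] <;> field_simp
    · ring
    · ring
    · linear_combination (-2 : K) * hδ

end SymOuter

theorem epsPair_apply (u v : Fin 2 → ℂ) : epsPair u v = u 0 * v 1 - u 1 * v 0 := by
  simp [epsPair, eps, Fin.sum_univ_two]
  ring

theorem epsPair_smul_right (c : ℂ) (u v : Fin 2 → ℂ) :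
    epsPair u (c • v) = c * epsPair u v := by
  simp only [epsPair_apply, Pi.smul_apply, smul_eq_mul]
  ring

def raise (α : Fin 2 → ℂ) : Fin 2 → ℂ := ![α 1, -α 0]

theorem epsPair_raise (α u : Fin 2 → ℂ) : epsPair (raise α) u = α ⬝ᵥ u := by
  simp [epsPair_apply, raise, dotProduct, Fin.sum_univ_two]
  ring

theorem epsPair_raise_raise (α β : Fin 2 → ℂ) :
    epsPair (raise α) (raise β) = epsPair α β := by
  rw [epsPair_raise, epsPair_apply]
  simp [raise, dotProduct, Fin.sum_univ_two]
  ring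

theorem bil_symOuter (α β u v : Fin 2 → ℂ) :
    bil (symOuter α β) u v = ((α ⬝ᵥ u) * (β ⬝ᵥ v) + (β ⬝ᵥ u) * (α ⬝ᵥ v)) / 2 := by
  simp only [bil, symOuter, of_apply, dotProduct, Fin.sum_univ_two]
  ring

/-- A symmetric bilinear form `κ` on `ℂ²` with nonzero determinant (i.e. `κ_{AB}κ^{AB} ≠ 0`)
admits a normalized spin dyad `o, ι` with `ε(o,ι) = 1` and a nonzero scalar `c` such that
`κ_{AB} = c · o_{(A} ι_{B)}`, the covectors being the ε-duals of `o` and `ι`. -/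
theorem typeD_killing_spinor_normal_form (κ : Matrix (Fin 2) (Fin 2) ℂ)
    (hsym : κᵀ = κ) (hdet : κ.det ≠ 0) :
    ∃ o ι : Fin 2 → ℂ, ∃ c : ℂ, c ≠ 0 ∧ epsPair o ι = 1 ∧
      ∀ u v : Fin 2 → ℂ,
        bil κ u v = c * (epsPair o u * epsPair ι v + epsPair ι u * epsPair o v) / 2 := by
  obtain ⟨α, β, rfl⟩ := exists_symOuter_eq_of_transpose_eq κ hsym
  have hw : epsPair α β ≠ 0 := by
    rintro h
    apply hdet
    rw [det_symOuter, ← epsPair_apply, h]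
    ring
  refine ⟨raise α, raise ((epsPair α β)⁻¹ • β), epsPair α β, hw, ?_, fun u v => ?_⟩
  · rw [epsPair_raise_raise, epsPair_smul_right, inv_mul_cancel₀ hw]
  · simp only [bil_symOuter, epsPair_raise, smul_dotProduct, smul_eq_mul]
    field_simp
end
end

section
/- Let o ∈ ℂ² be nonzero, let κ_{AB} = o_A o_B, and let Ψ_{ABCD} be a totally symmetric 4-linear form on ℂ². If κ_{(A}{}^F Ψ_{BCD)F} = 0 (total symmetrization over A,B,C,D with F contracted via the symplectic form ε), then there exists ψ ∈ ℂ such that Ψ_{ABCD} = ψ · o_A o_B o_C o_D; i.e., Ψ is of Petrov type N with repeated principal spinor o. -/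
open Matrix

noncomputable section

/-- The ε-dual covector `u_A = u^B ε_{BA}` of a vector `u`. -/
def lower (u : Fin 2 → ℂ) (a : Fin 2) : ℂ := ∑ b, u b * eps b a

/-- Total symmetrization of a 4-linear form. -/
def sym4 (T : Fin 2 → Fin 2 → Fin 2 → Fin 2 → ℂ) (a b c d : Fin 2) : ℂ :=
  (∑ σ : Equiv.Perm (Fin 4),
      (fun x : Fin 4 → Fin 2 => T (x 0) (x 1) (x 2) (x 3)) (![a, b, c, d] ∘ σ)) / 24

/-! Contracting with `ε` turns the Buchdahl condition into `o_(A φ_BCD) = 0`, where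
`φ_BCD = o^F Ψ_BCDF`. Read as binary forms, this says that the linear form `o_A` times the cubic
`φ` vanishes, so `φ = 0` because `ℂ[x, y]` is a domain. Finally, a symmetric `Ψ` killed by `o`
in its last slot is a multiple of `o_A o_B o_C o_D`, since in dimension two the annihilator of
`o` is spanned by `o_A`. -/

theorem lower_zero (u : Fin 2 → ℂ) : lower u 0 = -u 1 := by
  simp [lower, eps, Fin.sum_univ_two]

theorem lower_one (u : Fin 2 → ℂ) : lower u 1 = u 0 := by
  simp [lower, eps, Fin.sum_univ_two]

theorem lower_ne_zero {u : Fin 2 → ℂ} (hu : u ≠ 0) : lower u ≠ 0 := by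
  contrapose! hu
  have h₀ := congrFun hu 0
  have h₁ := congrFun hu 1
  rw [lower_zero, Pi.zero_apply, neg_eq_zero] at h₀
  rw [lower_one, Pi.zero_apply] at h₁
  ext i
  fin_cases i <;> assumption

theorem sum_eps_mul_lower (u : Fin 2 → ℂ) (f : Fin 2) : ∑ e, eps f e * lower u e = u f := by
  fin_cases f <;> simp [Fin.sum_univ_two, eps, lower_zero, lower_one]

/-- In dimension two a covector annihilating `u` is proportional to `u_A`. -/
theorem mul_lower_eq_mul_lower_of_sum_mul_eq_zero {u α : Fin 2 → ℂ}
    (h : ∑ f, u f * α f = 0) (f g : Fin 2) : α f * lower u g = α g * lower u f := by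
  rw [Fin.sum_univ_two] at h
  have key : α 0 * lower u 1 = α 1 * lower u 0 := by
    rw [lower_zero, lower_one]
    linear_combination h
  fin_cases f <;> fin_cases g
  exacts [rfl, key, key.symm, rfl]

theorem eq_mul_lower_of_sum_mul_eq_zero {u : Fin 2 → ℂ} {Ψ : Fin 2 → Fin 2 → Fin 2 → Fin 2 → ℂ}
    (hΨ₁ : ∀ a b c d, Ψ a b c d = Ψ b a c d)
    (hΨ₂ : ∀ a b c d, Ψ a b c d = Ψ a c b d)
    (hΨ₃ : ∀ a b c d, Ψ a b c d = Ψ a b d c)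
    (h : ∀ b c d, ∑ f, u f * Ψ b c d f = 0) {g : Fin 2} (hg : lower u g ≠ 0) (a b c d : Fin 2) :
    Ψ a b c d = Ψ g g g g / lower u g ^ 4 * (lower u a * lower u b * lower u c * lower u d) := by
  have cross b c d := mul_lower_eq_mul_lower_of_sum_mul_eq_zero (h b c d)
  have cycle a b c d : Ψ a b c d = Ψ d a b c := by rw [hΨ₃, hΨ₂, hΨ₁]
  have e₁ := cross a b c d g
  have e₂ := cross g a b c g
  have e₃ := cross g g a b g
  have e₄ := cross g g g a g
  rw [← cycle] at e₂ e₃ e₄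
  rw [div_mul_eq_mul_div, eq_div_iff (pow_ne_zero 4 hg)]
  linear_combination lower u g ^ 3 * e₁ + lower u g ^ 2 * lower u d * e₂
    + lower u g * lower u c * lower u d * e₃ + lower u b * lower u c * lower u d * e₄

/-- The hypotheses say that `(v₀x + v₁y)(p₀x³ + 3p₁x²y + 3p₂xy² + p₃y³) = 0`. -/
theorem binary_cubic_eq_zero_of_mul_linear_eq_zero {v₀ v₁ p₀ p₁ p₂ p₃ : ℂ} (hv : v₀ ≠ 0 ∨ v₁ ≠ 0)
    (h₀ : v₀ * p₀ = 0) (h₁ : v₁ * p₀ + 3 * v₀ * p₁ = 0) (h₂ : v₁ * p₁ + v₀ * p₂ = 0)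
    (h₃ : 3 * v₁ * p₂ + v₀ * p₃ = 0) (h₄ : v₁ * p₃ = 0) :
    p₀ = 0 ∧ p₁ = 0 ∧ p₂ = 0 ∧ p₃ = 0 := by
  rcases hv with hv | hv <;> simp_all

theorem sym4_mul_24 (T : Fin 2 → Fin 2 → Fin 2 → Fin 2 → ℂ) (a b c d : Fin 2) :
    sym4 T a b c d * 24 =
      T a b c d + T a b d c + T a c b d + T a c d b + T a d b c + T a d c b
    + T b a c d + T b a d c + T b c a d + T b c d a + T b d a c + T b d c a
    + T c a b d + T c a d b + T c b a d + T c b d a + T c d a b + T c d b a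
    + T d a b c + T d a c b + T d b a c + T d b c a + T d c a b + T d c b a := by
  rw [sym4]
  simp only [← Equiv.Perm.decomposeFin.symm.sum_comp, Fintype.sum_prod_type]
  simp only [Fin.sum_univ_succ, Finset.univ_unique, Finset.sum_singleton, Function.comp_apply,
    show (1:Fin 4) = Fin.succ 0 from rfl, show (2:Fin 4) = Fin.succ 1 from rfl,
    show (3:Fin 4) = Fin.succ 2 from rfl, show (1:Fin 3) = Fin.succ 0 from rfl,
    show (2:Fin 3) = Fin.succ 1 from rfl, show (1:Fin 2) = Fin.succ 0 from rfl,
    Equiv.Perm.decomposeFin_symm_apply_zero, Equiv.Perm.decomposeFin_symm_apply_succ]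
  norm_num [Equiv.swap_apply_def, Fin.ext_iff]
  simp only [Matrix.cons_val]
  ring

theorem eq_zero_of_sym4_mul_eq_zero {v : Fin 2 → ℂ} (hv : v ≠ 0) {φ : Fin 2 → Fin 2 → Fin 2 → ℂ}
    (hφ₁ : ∀ a b c, φ a b c = φ b a c) (hφ₂ : ∀ a b c, φ a b c = φ a c b)
    (h : ∀ a b c d, sym4 (fun a b c d => v a * φ b c d) a b c d = 0) (a b c : Fin 2) :
    φ a b c = 0 := by
  have sort₁ c : φ 1 0 c = φ 0 1 c := hφ₁ 1 0 c
  have sort₂ a : φ a 1 0 = φ a 0 1 := hφ₂ a 1 0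
  have e₀ := sym4_mul_24 (fun a b c d => v a * φ b c d) 0 0 0 0
  have e₁ := sym4_mul_24 (fun a b c d => v a * φ b c d) 0 0 0 1
  have e₂ := sym4_mul_24 (fun a b c d => v a * φ b c d) 0 0 1 1
  have e₃ := sym4_mul_24 (fun a b c d => v a * φ b c d) 0 1 1 1
  have e₄ := sym4_mul_24 (fun a b c d => v a * φ b c d) 1 1 1 1
  simp only [h, zero_mul, sort₁, sort₂] at e₀ e₁ e₂ e₃ e₄
  have hv' : v 0 ≠ 0 ∨ v 1 ≠ 0 := by
    by_contra! hv₀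
    exact hv (funext fun i => by fin_cases i <;> simp [hv₀])
  obtain ⟨h₀, h₁, h₂, h₃⟩ := binary_cubic_eq_zero_of_mul_linear_eq_zero hv'
    (p₀ := φ 0 0 0) (p₁ := φ 0 0 1) (p₂ := φ 0 1 1) (p₃ := φ 1 1 1)
    (by linear_combination -e₀ / 24) (by linear_combination -e₁ / 6)
    (by linear_combination -e₂ / 12) (by linear_combination -e₃ / 6) (by linear_combination -e₄ / 24)
  fin_cases a <;> fin_cases b <;> fin_cases c <;> simp [sort₁, sort₂, h₀, h₁, h₂, h₃]

/-- Buchdahl constraint in the degenerate (type N) case: if `κ_{AB} = o_A o_B` with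
`o ≠ 0` and `Ψ_{ABCD}` is totally symmetric with `κ_{(A}{}^F Ψ_{BCD)F} = 0`, then
`Ψ_{ABCD} = ψ · o_A o_B o_C o_D` for some scalar `ψ`. -/
theorem buchdahl_typeN (o : Fin 2 → ℂ) (ho : o ≠ 0)
    (κ : Fin 2 → Fin 2 → ℂ) (hκ : ∀ a b, κ a b = lower o a * lower o b)
    (Ψ : Fin 2 → Fin 2 → Fin 2 → Fin 2 → ℂ)
    (hΨ₁ : ∀ a b c d, Ψ a b c d = Ψ b a c d)
    (hΨ₂ : ∀ a b c d, Ψ a b c d = Ψ a c b d)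
    (hΨ₃ : ∀ a b c d, Ψ a b c d = Ψ a b d c)
    (hBuchdahl : ∀ a b c d,
      sym4 (fun a b c d => ∑ f, ∑ e, eps f e * κ a e * Ψ b c d f) a b c d = 0) :
    ∃ ψ : ℂ, ∀ a b c d, Ψ a b c d =
      ψ * (lower o a * lower o b * lower o c * lower o d) := by
  have contract : (fun a b c d => ∑ f, ∑ e, eps f e * κ a e * Ψ b c d f) =
      fun a b c d => lower o a * ∑ f, o f * Ψ b c d f := by
    ext a b c d
    simp only [hκ, Finset.mul_sum, ← sum_eps_mul_lower o, Finset.sum_mul]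
    exact Finset.sum_congr rfl fun f _ => Finset.sum_congr rfl fun e _ => by ring
  rw [contract] at hBuchdahl
  have hℓ := lower_ne_zero ho
  have hφ := eq_zero_of_sym4_mul_eq_zero hℓ
    (fun b c d => by simp only [hΨ₁ b c]) (fun b c d => by simp only [hΨ₂ b c]) hBuchdahl
  obtain ⟨g, hg⟩ := Function.ne_iff.mp hℓ
  exact ⟨_, eq_mul_lower_of_sum_mul_eq_zero hΨ₁ hΨ₂ hΨ₃ hφ hg⟩
end
end

section
/- Let (M, g) be a pseudo-Riemannian manifold with Levi-Civita connection ∇, let Ξ, s : M → ℝ be smooth functions, and let L be a smooth symmetric 2-tensor field on M. Assume the two equations Hess Ξ + Ξ·L = s·g and ds + L(grad Ξ, ·) = 0 hold on M. Then the function Z := −6·Ξ·s + 3·g(grad Ξ, grad Ξ) has vanishing differential, dZ = 0; hence Z is locally constant. -/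
/-!
Differentiate `Z` along `v` and substitute the field equations: the first one, paired with
`grad Ξ`, turns the derivative of `3 g(grad Ξ, grad Ξ)` into `6 s dΞ(v) − 6 Ξ L(v, grad Ξ)`,
while the second one turns the derivative of `−6 Ξ s` into `−6 s dΞ(v) + 6 Ξ L(grad Ξ, v)`.
The symmetry of `g` and `L` makes the two contributions cancel.

The metric is a constant bilinear form `B`, so the Levi-Civita connection is the flat
derivative and `Hess Ξ (u, v) = B (D_u grad Ξ) v`.
-/

theorem ContinuousLinearMap.fderiv_bilinear_self_apply {𝕜 E F G : Type*}
    [NontriviallyNormedField 𝕜] [NormedAddCommGroup E] [NormedSpace 𝕜 E]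
    [NormedAddCommGroup F] [NormedSpace 𝕜 F] [NormedAddCommGroup G] [NormedSpace 𝕜 G]
    (B : F →L[𝕜] F →L[𝕜] G) {f : E → F} {p : E} (hf : DifferentiableAt 𝕜 f p) (v : E) :
    fderiv 𝕜 (fun q => B (f q) (f q)) p v =
      B (f p) (fderiv 𝕜 f p v) + B (fderiv 𝕜 f p v) (f p) := by
  simp [B.fderiv_of_bilinear hf hf]

/-- Conformal Einstein field equations: if `Hess Ξ + Ξ·L = s·g` and
`ds + L(grad Ξ, ·) = 0` hold for a (pseudo-)metric `B`, a symmetric 2-tensor `L` and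
functions `Ξ, s`, then `Z := −6 Ξ s + 3 g(grad Ξ, grad Ξ)` has vanishing differential,
hence is locally constant.  Here the metric is modelled by a constant symmetric
bilinear form `B`, `grad Ξ` is the `B`-gradient of `Ξ`, and the covariant Hessian is
`Hess Ξ (u,v) = B(D_u grad Ξ, v)`. -/
theorem conformal_constraint_propagation
    {E : Type*} [NormedAddCommGroup E] [NormedSpace ℝ E]
    (B : E →L[ℝ] E →L[ℝ] ℝ) (hBsym : ∀ u v, B u v = B v u)
    (Ξ s : E → ℝ) (L : E → E →L[ℝ] E →L[ℝ] ℝ) (gradΞ : E → E)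
    (hΞ : Differentiable ℝ Ξ) (hs : Differentiable ℝ s)
    (hgrad : Differentiable ℝ gradΞ)
    (hLsym : ∀ p u v, L p u v = L p v u)
    (hgraddef : ∀ p v, B (gradΞ p) v = fderiv ℝ Ξ p v)
    (heq1 : ∀ p u v, B (fderiv ℝ gradΞ p u) v + Ξ p * L p u v = s p * B u v)
    (heq2 : ∀ p v, fderiv ℝ s p v + L p (gradΞ p) v = 0) :
    ∀ p, fderiv ℝ (fun q => -6 * Ξ q * s q + 3 * B (gradΞ q) (gradΞ q)) p = 0 := by
  intro p
  ext v
  have hdΞ : fderiv ℝ Ξ p v = B v (gradΞ p) := by rw [← hgraddef, hBsym]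
  have hds : fderiv ℝ s p v = -L p v (gradΞ p) := by
    rw [hLsym]
    linarith [heq2 p v]
  have hHess :
      B (fderiv ℝ gradΞ p v) (gradΞ p) = s p * B v (gradΞ p) - Ξ p * L p v (gradΞ p) := by
    linarith [heq1 p v (gradΞ p)]
  rw [fderiv_fun_add (by fun_prop) (by fun_prop), fderiv_fun_mul (by fun_prop) (hs p),
    fderiv_const_mul (hΞ p), fderiv_const_mul (by fun_prop)]
  simp only [add_apply, smul_apply, smul_eq_mul, B.fderiv_bilinear_self_apply (hgrad p)]
  rw [hdΞ, hds, hBsym (gradΞ p), hHess]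
  simp only [zero_apply]
  ring
end
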